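/- arXiv:1409.4321 — 2 statements merged into one kernel-verified Lean document; each statement's English description precedes it below -/
import Mathlib

section
/- Let K ⊆ ℝ^m be a nonempty compact set and let G_0, G_1, …, G_p : K → ℝ^{n×n} be continuous maps taking values in the symmetric matrices, with G(x, δ) = G_0(δ) + Σ_{i=1}^p x_i G_i(δ). If for every δ ∈ K there exists x(δ) ∈ ℝ^p such that G(x(δ), δ) is positive definite, then there exists α > 0 such that for every δ ∈ K there exists x ∈ ℝ^p with G(x, δ) − 2α·I positive semidefinite. -/
/-!
Fix `δ₀ ∈ K` and `x` with `G(x, δ₀) ≻ 0`. Matrices with positive quadratic form are an open set,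
since positivity only has to be checked on the compact unit sphere; hence `G(x, δ₀) − εI ≻ 0`
for some `ε > 0`, and by continuity `G(x, δ) − εI ≻ 0` for all `δ ∈ K` near `δ₀`. Compactness of `K`
turns these local margins into a uniform one, the minimum over a finite subcover.
-/

open Matrix Filter Topology

namespace Matrix

variable {ι : Type*}

theorem dotProduct_mulVec_smul_self [Fintype ι] (A : Matrix ι ι ℝ) (c : ℝ) (v : ι → ℝ) :
    (c • v) ⬝ᵥ (A *ᵥ (c • v)) = c ^ 2 * (v ⬝ᵥ (A *ᵥ v)) := by
  simp only [mulVec_smul, smul_dotProduct, dotProduct_smul, smul_eq_mul]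
  ring

theorem isOpen_setOf_forall_dotProduct_mulVec_pos [Fintype ι] :
    IsOpen {A : Matrix ι ι ℝ | ∀ v ≠ 0, 0 < v ⬝ᵥ (A *ᵥ v)} := by
  have hsphere : {A : Matrix ι ι ℝ | ∀ v ≠ 0, 0 < v ⬝ᵥ (A *ᵥ v)} =
      {A | ∀ v ∈ Metric.sphere (0 : ι → ℝ) 1, 0 < v ⬝ᵥ (A *ᵥ v)} := by
    ext A
    refine ⟨fun h v hv => h v (ne_zero_of_mem_unit_sphere ⟨v, hv⟩), fun h v hv => ?_⟩
    have hunit := h (‖v‖⁻¹ • v) (by simp [norm_smul, hv])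
    rw [dotProduct_mulVec_smul_self] at hunit
    exact pos_of_mul_pos_right hunit (by positivity)
  have hcont : Continuous fun q : Matrix ι ι ℝ × (ι → ℝ) => q.2 ⬝ᵥ (q.1 *ᵥ q.2) :=
    continuous_snd.dotProduct (continuous_fst.matrix_mulVec continuous_snd)
  rw [hsphere, isOpen_iff_eventually]
  intro A hA
  exact (isCompact_sphere 0 1).eventually_forall_of_forall_eventually fun v hv =>
    hcont.continuousAt.eventually (lt_mem_nhds (hA v hv))

theorem posDef_iff_isSymm_and_dotProduct_mulVec_pos [Fintype ι] {A : Matrix ι ι ℝ} :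
    A.PosDef ↔ A.IsSymm ∧ ∀ v ≠ 0, 0 < v ⬝ᵥ (A *ᵥ v) := by
  simp [posDef_iff_dotProduct_mulVec]

theorem PosSemidef.sub_smul_one_of_le [DecidableEq ι] {A : Matrix ι ι ℝ} {a b : ℝ}
    (hA : (A - b • 1).PosSemidef) (hab : a ≤ b) : (A - a • 1).PosSemidef := by
  have h : A - a • 1 = (A - b • 1) + (b - a) • (1 : Matrix ι ι ℝ) := by
    rw [sub_smul]; abel
  rw [h]
  exact hA.add (PosSemidef.one.smul (sub_nonneg.mpr hab))

end Matrix

theorem ContinuousWithinAt.eventually_posDef_sub_smul_one {X : Type*} [TopologicalSpace X]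
    {ι : Type*} [Fintype ι] [DecidableEq ι] {F : X → Matrix ι ι ℝ} {s : Set X} {x₀ : X}
    (hF : ContinuousWithinAt F s x₀) (hpos : (F x₀).PosDef) (hsymm : ∀ x ∈ s, (F x).IsSymm) :
    ∃ ε : ℝ, 0 < ε ∧ ∀ᶠ x in 𝓝[s] x₀, (F x - ε • 1).PosDef := by
  set O := {A : Matrix ι ι ℝ | ∀ v ≠ 0, 0 < v ⬝ᵥ (A *ᵥ v)}
  have hO : IsOpen O := isOpen_setOf_forall_dotProduct_mulVec_pos
  have hshift : ∀ᶠ t in 𝓝[>] (0 : ℝ), F x₀ - t • 1 ∈ O := by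
    have hcont : Continuous fun t : ℝ => F x₀ - t • (1 : Matrix ι ι ℝ) := by fun_prop
    refine nhdsWithin_le_nhds (hcont.continuousAt.eventually_mem (hO.mem_nhds ?_))
    rw [zero_smul, sub_zero]
    exact (posDef_iff_isSymm_and_dotProduct_mulVec_pos.mp hpos).2
  obtain ⟨ε, hεO, hε⟩ := (hshift.and self_mem_nhdsWithin).exists
  refine ⟨ε, hε, ?_⟩
  filter_upwards [(hF.sub continuousWithinAt_const).eventually_mem (hO.mem_nhds hεO),
    self_mem_nhdsWithin] with x hxO hx
  exact posDef_iff_isSymm_and_dotProduct_mulVec_pos.mpr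
    ⟨(hsymm x hx).sub (isSymm_one.smul ε), hxO⟩

theorem IsCompact.exists_pos_forall_of_antitone {X : Type*} [TopologicalSpace X] {K : Set X}
    (hK : IsCompact K) {P : ℝ → X → Prop} (hP : ∀ x, Antitone (P · x))
    (hloc : ∀ x ∈ K, ∃ ε > 0, ∀ᶠ y in 𝓝[K] x, P ε y) : ∃ α > 0, ∀ x ∈ K, P α x := by
  refine hK.induction_on (p := fun s => ∃ α > 0, ∀ x ∈ s, P α x) ⟨1, one_pos, by simp⟩ ?_ ?_ ?_
  · rintro s t hst ⟨α, hα, ht⟩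
    exact ⟨α, hα, fun x hx => ht x (hst hx)⟩
  · rintro s t ⟨α, hα, hs⟩ ⟨β, hβ, ht⟩
    refine ⟨min α β, lt_min hα hβ, ?_⟩
    rintro x (hx | hx)
    · exact hP x (min_le_left α β) (hs x hx)
    · exact hP x (min_le_right α β) (ht x hx)
  · intro x hx
    obtain ⟨ε, hε, hev⟩ := hloc x hx
    exact ⟨_, hev, ε, hε, fun y hy => hy⟩

theorem stmt1_general (m n p : ℕ)
    (K : Set (Fin m → ℝ)) (hK : IsCompact K)
    (G0 : (Fin m → ℝ) → Matrix (Fin n) (Fin n) ℝ)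
    (G : Fin p → (Fin m → ℝ) → Matrix (Fin n) (Fin n) ℝ)
    (hG0c : ContinuousOn G0 K) (hGc : ∀ i, ContinuousOn (G i) K)
    (hG0s : ∀ δ ∈ K, (G0 δ).IsSymm) (hGs : ∀ i, ∀ δ ∈ K, (G i δ).IsSymm)
    (hfeas : ∀ δ ∈ K, ∃ x : Fin p → ℝ, (G0 δ + ∑ i, x i • G i δ).PosDef) :
    ∃ α : ℝ, 0 < α ∧ ∀ δ ∈ K, ∃ x : Fin p → ℝ,
      (G0 δ + ∑ i, x i • G i δ - (2 * α) • (1 : Matrix (Fin n) (Fin n) ℝ)).PosSemidef := by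
  refine hK.exists_pos_forall_of_antitone
    (fun δ a b hab ⟨x, hx⟩ => ⟨x, hx.sub_smul_one_of_le (by linarith)⟩) fun δ₀ hδ₀ => ?_
  obtain ⟨x, hx⟩ := hfeas δ₀ hδ₀
  have hcont : ContinuousOn (fun δ => G0 δ + ∑ i, x i • G i δ) K :=
    hG0c.add (continuousOn_finsetSum _ fun i _ => (hGc i).const_smul (x i))
  have hsymm : ∀ δ ∈ K, (G0 δ + ∑ i, x i • G i δ).IsSymm := fun δ hδ =>
    (hG0s δ hδ).add <| Finset.sum_induction _ IsSymm (fun _ _ => IsSymm.add) isSymm_zero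
      fun i _ => (hGs i δ hδ).smul (x i)
  obtain ⟨ε, hε, hev⟩ := (hcont δ₀ hδ₀).eventually_posDef_sub_smul_one hx hsymm
  refine ⟨ε / 2, half_pos hε, hev.mono fun δ hδ => ⟨x, ?_⟩⟩
  rw [mul_div_cancel₀ ε two_ne_zero]
  exact hδ.posSemidef

/-- step i of Bliman's proof: feasibility of the strict LMI on a
nonempty compact set yields a uniform margin `α > 0` with
`G(x, δ) − 2α·I ⪰ 0` solvable for every `δ ∈ K`. -/
theorem stmt1 (m n p : ℕ) (hm : 0 < m) (hn : 0 < n) (hp : 0 < p)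
    (K : Set (Fin m → ℝ)) (hK : IsCompact K) (hKne : K.Nonempty)
    (G0 : (Fin m → ℝ) → Matrix (Fin n) (Fin n) ℝ)
    (G : Fin p → (Fin m → ℝ) → Matrix (Fin n) (Fin n) ℝ)
    (hG0c : ContinuousOn G0 K) (hGc : ∀ i, ContinuousOn (G i) K)
    (hG0s : ∀ δ ∈ K, (G0 δ).IsSymm) (hGs : ∀ i, ∀ δ ∈ K, (G i δ).IsSymm)
    (hfeas : ∀ δ ∈ K, ∃ x : Fin p → ℝ, (G0 δ + ∑ i, x i • G i δ).PosDef) :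
    ∃ α : ℝ, 0 < α ∧ ∀ δ ∈ K, ∃ x : Fin p → ℝ,
      (G0 δ + ∑ i, x i • G i δ - (2 * α) • (1 : Matrix (Fin n) (Fin n) ℝ)).PosSemidef :=
  stmt1_general m n p K hK G0 G hG0c hGc hG0s hGs hfeas
end

section
/- Let K ⊆ ℂ^m be a nonempty compact set, let G_0 : K → ℂ^{n×n} be a continuous map taking Hermitian values, and let G_1, …, G_p : K → ℂ^{n×n} be continuous. For x ∈ ℂ^p and δ ∈ K define the Hermitian matrix G(x, δ) = G_0(δ) + Σ_{i=1}^p (x_i G_i(δ) + conj(x_i) G_i(δ)*). If for every δ ∈ K there exists x(δ) ∈ ℂ^p such that G(x(δ), δ) is positive definite, then there exist polynomials p_1, …, p_p in the 2m complex variables (z_1, …, z_m, w_1, …, w_m) with complex coefficients such that, setting x^*(δ) = (p_1(δ, conj(δ)), …, p_p(δ, conj(δ))), the matrix G(x^*(δ), δ) is positive definite for every δ ∈ K. -/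
/-!
For `δ ∈ K` the solutions `x` of the LMI form a convex set, as `x ↦ G(x, δ)` is real-affine, and
the set `W` of pairs `(δ, x)` solving it is open in `K × ℂ^p`: on Hermitian matrices, positive
definiteness is an open condition by compactness of the unit sphere. A partition of unity
therefore glues locally constant solutions into a continuous solution `x̄`. As `K` is compact, the
continuous maps whose graph lies in `W` form an open set of maps containing `x̄`, and by
Stone–Weierstrass it contains a map whose components are polynomials in `δ` and `conj δ`.
-/

open Matrix Set
open scoped ComplexOrder

namespace Matrix

variable {𝕜 n : Type*} [RCLike 𝕜] [Fintype n]

theorem star_smul_dotProduct_mulVec_smul (A : Matrix n n 𝕜) (c : 𝕜) (v : n → 𝕜) :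
    star (c • v) ⬝ᵥ A *ᵥ (c • v) = (‖c‖ ^ 2 : 𝕜) * (star v ⬝ᵥ A *ᵥ v) := by
  rw [star_smul, mulVec_smul, smul_dotProduct, dotProduct_smul, smul_smul, smul_eq_mul,
    RCLike.star_def, RCLike.conj_mul]

theorem IsHermitian.posDef_iff_forall_mem_sphere {A : Matrix n n 𝕜} (hA : A.IsHermitian) :
    A.PosDef ↔ ∀ v ∈ Metric.sphere (0 : n → 𝕜) 1, 0 < RCLike.re (star v ⬝ᵥ A *ᵥ v) := by
  refine ⟨fun h v hv => h.re_dotProduct_pos (ne_zero_of_mem_unit_sphere ⟨v, hv⟩), fun h => ?_⟩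
  refine .of_dotProduct_mulVec_pos hA fun v hv => ?_
  have hv' : 0 < ‖v‖ := norm_pos_iff.mpr hv
  have hu : (‖v‖⁻¹ : 𝕜) • v ∈ Metric.sphere (0 : n → 𝕜) 1 := by
    simp [norm_smul, hv'.ne']
  have hscale := star_smul_dotProduct_mulVec_smul A (‖v‖ : 𝕜) ((‖v‖⁻¹ : 𝕜) • v)
  rw [smul_smul, mul_inv_cancel₀ (by exact_mod_cast hv'.ne'), one_smul] at hscale
  refine RCLike.pos_iff.mpr ⟨?_, hA.im_star_dotProduct_mulVec_self v⟩
  rw [hscale, ← RCLike.ofReal_pow, RCLike.re_ofReal_mul]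
  exact mul_pos (by simpa using pow_pos hv' 2) (h _ hu)

theorem isOpen_setOf_posDef {X : Type*} [TopologicalSpace X] {f : X → Matrix n n 𝕜}
    (hf : Continuous f) (hA : ∀ x, (f x).IsHermitian) : IsOpen {x | (f x).PosDef} := by
  simp only [fun x => (hA x).posDef_iff_forall_mem_sphere]
  refine isOpen_iff_eventually.mpr fun x hx =>
    (isCompact_sphere 0 1).eventually_forall_of_forall_eventually fun v hv => ?_
  have hcont : Continuous fun z : X × (n → 𝕜) => RCLike.re (star z.2 ⬝ᵥ f z.1 *ᵥ z.2) := by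
    fun_prop
  exact hcont.continuousAt.eventually (lt_mem_nhds (hx v hv))

omit [Fintype n] in
theorem convex_setOf_posDef : Convex ℝ {A : Matrix n n 𝕜 | A.PosDef} := by
  intro A hA B hB a b ha hb hab
  rcases ha.eq_or_lt with rfl | ha
  · simp_all
  · exact (hA.smul ha).add_posSemidef (hB.posSemidef.smul hb)

end Matrix

section

variable {𝕜 n ι : Type*} [RCLike 𝕜] [Fintype ι]

/-- The matrix `G(x, δ)` of the statement at a fixed parameter `δ`. -/
noncomputable def lmi (G₀ : Matrix n n 𝕜) (G : ι → Matrix n n 𝕜) (x : ι → 𝕜) : Matrix n n 𝕜 :=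
  G₀ + ∑ i, (x i • G i + starRingEnd 𝕜 (x i) • (G i)ᴴ)

variable {G₀ : Matrix n n 𝕜} {G : ι → Matrix n n 𝕜}

theorem isHermitian_lmi (hG₀ : G₀.IsHermitian) (x : ι → 𝕜) : (lmi G₀ G x).IsHermitian := by
  refine hG₀.add (isSelfAdjoint_sum _ fun i _ => ?_)
  simp only [IsSelfAdjoint, star_add, star_smul, star_eq_conjTranspose, conjTranspose_conjTranspose,
    RCLike.star_def, RCLike.conj_conj, add_comm]

theorem lmi_smul_add_smul (x y : ι → 𝕜) {a b : ℝ} (hab : a + b = 1) :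
    lmi G₀ G (a • x + b • y) = a • lmi G₀ G x + b • lmi G₀ G y := by
  have hG₀ : G₀ = a • G₀ + b • G₀ := by rw [← add_smul, hab, one_smul]
  simp only [lmi, Pi.add_apply, Pi.smul_apply, map_add, RCLike.conj_smul, add_smul, smul_add,
    Finset.smul_sum, Finset.sum_add_distrib]
  conv_lhs => rw [hG₀]
  simp only [smul_assoc]
  abel

theorem convex_setOf_posDef_lmi : Convex ℝ {x : ι → 𝕜 | (lmi G₀ G x).PosDef} := by
  intro x hx y hy a b ha hb hab
  show (lmi G₀ G (a • x + b • y)).PosDef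
  rw [lmi_smul_add_smul x y hab]
  exact convex_setOf_posDef hx hy ha hb hab

attribute [local fun_prop] RCLike.continuous_conj

theorem Continuous.lmi {X : Type*} [TopologicalSpace X] {G₀ : X → Matrix n n 𝕜}
    {G : ι → X → Matrix n n 𝕜} {x : X → ι → 𝕜} (hG₀ : Continuous G₀) (hG : ∀ i, Continuous (G i))
    (hx : Continuous x) : Continuous fun t => _root_.lmi (G₀ t) (fun i => G i t) (x t) := by
  unfold _root_.lmi
  fun_prop

end

theorem exists_continuous_forall_mem_of_isOpen_of_convex {X E : Type*} [TopologicalSpace X]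
    [NormalSpace X] [ParacompactSpace X] [AddCommGroup E] [Module ℝ E] [TopologicalSpace E]
    [IsTopologicalAddGroup E] [ContinuousSMul ℝ E] {W : Set (X × E)} (hW : IsOpen W)
    (hconv : ∀ x, Convex ℝ {y | (x, y) ∈ W}) (hne : ∀ x, ∃ y, (x, y) ∈ W) :
    ∃ g : C(X, E), ∀ x, (x, g x) ∈ W :=
  exists_continuous_forall_mem_convex_of_local_const hconv fun x =>
    let ⟨y, hy⟩ := hne x
    ⟨y, (continuous_id.prodMk continuous_const).continuousAt.eventually (hW.mem_nhds hy)⟩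

theorem ContinuousMap.isOpen_setOf_forall_apply_mem {X ι 𝕜 : Type*} [TopologicalSpace X]
    [CompactSpace X] [LocallyCompactSpace X] [TopologicalSpace 𝕜] {W : Set (X × (ι → 𝕜))}
    (hW : IsOpen W) : IsOpen {f : ι → C(X, 𝕜) | ∀ x, (x, fun i => f i x) ∈ W} := by
  let graph : (ι → C(X, 𝕜)) → C(X, X × (ι → 𝕜)) := fun f =>
    ⟨fun x => (x, fun i => f i x), by fun_prop⟩
  have hgraph : Continuous graph := ContinuousMap.continuous_of_continuous_uncurry _
    (show Continuous fun p : (ι → C(X, 𝕜)) × X => (p.2, fun i => p.1 i p.2) by fun_prop)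
  simpa [graph, range_subset_iff] using (isOpen_setOfPred_range_subset hW).preimage hgraph

theorem exists_forall_mem_starSubalgebra_forall_mem_of_isOpen {X ι 𝕜 : Type*} [RCLike 𝕜]
    [TopologicalSpace X] [CompactSpace X] [T2Space X] [Finite ι]
    (A : StarSubalgebra 𝕜 C(X, 𝕜)) (hA : A.SeparatesPoints) {W : Set (X × (ι → 𝕜))}
    (hW : IsOpen W) (g : C(X, ι → 𝕜)) (hg : ∀ x, (x, g x) ∈ W) :
    ∃ f : ι → C(X, 𝕜), (∀ i, f i ∈ A) ∧ ∀ x, (x, fun i => f i x) ∈ W := by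
  have hdense : Dense (univ.pi fun _ : ι => (A : Set C(X, 𝕜))) := by
    refine dense_pi _ fun _ _ => dense_iff_closure_eq.mpr ?_
    rw [← StarSubalgebra.topologicalClosure_coe,
      ContinuousMap.starSubalgebra_topologicalClosure_eq_top_of_separatesPoints A hA,
      StarSubalgebra.coe_top]
  obtain ⟨f, hfW, hfA⟩ := hdense.inter_open_nonempty _
    (ContinuousMap.isOpen_setOf_forall_apply_mem hW) ⟨fun i => (ContinuousMap.eval i).comp g, hg⟩
  exact ⟨f, fun i => hfA i (mem_univ i), hfW⟩

section

variable {σ 𝕜 : Type*} [RCLike 𝕜] (K : Set (σ → 𝕜))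

def starPolynomialFunctions : StarSubalgebra 𝕜 C(K, 𝕜) :=
  StarAlgebra.adjoin 𝕜 (range fun j => (ContinuousMap.eval j).restrict K)

theorem starPolynomialFunctions_separatesPoints :
    (starPolynomialFunctions K).SeparatesPoints := by
  intro δ₁ δ₂ hne
  obtain ⟨j, hj⟩ := Function.ne_iff.mp (Subtype.coe_ne_coe.mpr hne)
  exact ⟨_, ⟨_, StarAlgebra.subset_adjoin 𝕜 _ (mem_range_self j), rfl⟩, hj⟩

theorem exists_mvPolynomial_of_mem_starPolynomialFunctions {f : C(K, 𝕜)}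
    (hf : f ∈ starPolynomialFunctions K) : ∃ P : MvPolynomial (σ ⊕ σ) 𝕜,
      ∀ δ : K, f δ = MvPolynomial.eval (Sum.elim δ.1 fun j => starRingEnd 𝕜 (δ.1 j)) P := by
  rw [← StarSubalgebra.mem_toSubalgebra, starPolynomialFunctions, StarAlgebra.adjoin_toSubalgebra,
    ← image_star, ← range_comp, ← Sum.elim_range, Algebra.adjoin_range_eq_range_aeval] at hf
  obtain ⟨P, rfl⟩ := hf
  refine ⟨P, fun δ => ?_⟩
  change ContinuousMap.evalAlgHom 𝕜 𝕜 δ (MvPolynomial.aeval _ P) = _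
  rw [← AlgHom.comp_apply, MvPolynomial.comp_aeval]
  change MvPolynomial.eval _ P = _
  congr 2 with s
  cases s <;> rfl

end

theorem stmt5_general (m n p : ℕ)
    (K : Set (Fin m → ℂ)) (hK : IsCompact K)
    (G0 : (Fin m → ℂ) → Matrix (Fin n) (Fin n) ℂ)
    (G : Fin p → (Fin m → ℂ) → Matrix (Fin n) (Fin n) ℂ)
    (hG0c : ContinuousOn G0 K) (hG0h : ∀ δ ∈ K, (G0 δ).IsHermitian)
    (hGc : ∀ i, ContinuousOn (G i) K)
    (hfeas : ∀ δ ∈ K, ∃ x : Fin p → ℂ,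
      (G0 δ + ∑ i, (x i • G i δ + (starRingEnd ℂ) (x i) • (G i δ)ᴴ)).PosDef) :
    ∃ P : Fin p → MvPolynomial (Fin m ⊕ Fin m) ℂ,
      ∀ δ ∈ K,
        (G0 δ + ∑ i,
          ((MvPolynomial.eval (Sum.elim δ fun j => (starRingEnd ℂ) (δ j)) (P i)) • G i δ +
            (starRingEnd ℂ)
              (MvPolynomial.eval (Sum.elim δ fun j => (starRingEnd ℂ) (δ j)) (P i)) •
              (G i δ)ᴴ)).PosDef := by
  have : CompactSpace K := isCompact_iff_compactSpace.mp hK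
  let W : Set (K × (Fin p → ℂ)) := {z | (lmi (G0 z.1) (fun i => G i z.1) z.2).PosDef}
  have hW : IsOpen W := Matrix.isOpen_setOf_posDef
    ((hG0c.domRestrict.comp continuous_fst).lmi (fun i => (hGc i).domRestrict.comp continuous_fst)
      continuous_snd)
    fun z => isHermitian_lmi (hG0h z.1 z.1.2) _
  obtain ⟨x, hx⟩ := exists_continuous_forall_mem_of_isOpen_of_convex hW
    (fun δ => convex_setOf_posDef_lmi (G₀ := G0 δ) (G := fun i => G i δ)) fun δ => hfeas δ δ.2
  obtain ⟨f, hfA, hfW⟩ := exists_forall_mem_starSubalgebra_forall_mem_of_isOpen _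
    (starPolynomialFunctions_separatesPoints K) hW x hx
  choose P hP using fun i => exists_mvPolynomial_of_mem_starPolynomialFunctions K (hfA i)
  refine ⟨P, fun δ hδ => ?_⟩
  have hδW := hfW ⟨δ, hδ⟩
  simp only [hP] at hδW
  exact hδW

/-- first part of Theorem `th:ours`: a complex-parameter-dependent
LMI which is pointwise feasible on a nonempty compact set `K ⊆ ℂ^m` admits a
solution which is polynomial in `δ` and `conj δ`. -/
theorem stmt5 (m n p : ℕ) (hm : 0 < m) (hn : 0 < n) (hp : 0 < p)
    (K : Set (Fin m → ℂ)) (hK : IsCompact K) (hKne : K.Nonempty)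
    (G0 : (Fin m → ℂ) → Matrix (Fin n) (Fin n) ℂ)
    (G : Fin p → (Fin m → ℂ) → Matrix (Fin n) (Fin n) ℂ)
    (hG0c : ContinuousOn G0 K) (hG0h : ∀ δ ∈ K, (G0 δ).IsHermitian)
    (hGc : ∀ i, ContinuousOn (G i) K)
    (hfeas : ∀ δ ∈ K, ∃ x : Fin p → ℂ,
      (G0 δ + ∑ i, (x i • G i δ + (starRingEnd ℂ) (x i) • (G i δ)ᴴ)).PosDef) :
    ∃ P : Fin p → MvPolynomial (Fin m ⊕ Fin m) ℂ,
      ∀ δ ∈ K,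
        (G0 δ + ∑ i,
          ((MvPolynomial.eval (Sum.elim δ fun j => (starRingEnd ℂ) (δ j)) (P i)) • G i δ +
            (starRingEnd ℂ)
              (MvPolynomial.eval (Sum.elim δ fun j => (starRingEnd ℂ) (δ j)) (P i)) •
              (G i δ)ᴴ)).PosDef :=
  stmt5_general m n p K hK G0 G hG0c hG0h hGc hfeas
end
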